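/- arXiv:solv-int/9912004 — 2 statements merged into one kernel-verified Lean document; each statement's English description precedes it below -/
import Mathlib

section
/- Let η₀, η₁ : ℝ³ → ℝ be smooth functions of (x,y,t) satisfying the 2+1 dimensional coupled system η₀_t = η₀_{xxx} + 6η₀η₀_x and η₁_t = η₁_{xxx} + 3η₀_{xxy} + 6(η₀η₁)_x + 6η₀η₀_y. Then ∂_t(η₀η₁) = ∂_x(η₀_{xx}η₁ + η₀η₁_{xx} − η₀_x η₁_x + 6η₀²η₁ + 3η₀η₀_{xy} − (3/2)(η₀_x η₀)_y) + ∂_y(2η₀³ + 3η₀η₀_{xx} − (3/2)η₀_x² + (3/2)(η₀ η₀_x)_x − 3η₀η₀_{xx}); in particular, there exist differential polynomials F, G in η₀, η₁ and their derivatives such that ∂_t(η₀η₁) = ∂_x F + ∂_y G pointwise. -/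
noncomputable section

def p3x (f : ℝ → ℝ → ℝ → ℝ) : ℝ → ℝ → ℝ → ℝ := fun x y t => deriv (fun x' => f x' y t) x
def p3y (f : ℝ → ℝ → ℝ → ℝ) : ℝ → ℝ → ℝ → ℝ := fun x y t => deriv (fun y' => f x y' t) y
def p3t (f : ℝ → ℝ → ℝ → ℝ) : ℝ → ℝ → ℝ → ℝ := fun x y t => deriv (fun t' => f x y t') t

/-- Uncurried version of a function of three real variables. -/
abbrev uc (f : ℝ → ℝ → ℝ → ℝ) : ℝ × ℝ × ℝ → ℝ := fun p => f p.1 p.2.1 p.2.2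

/-- Directional (partial) derivative along `v`. -/
def pd (v : ℝ × ℝ × ℝ) (f : ℝ × ℝ × ℝ → ℝ) : ℝ × ℝ × ℝ → ℝ := fun p => fderiv ℝ f p v

lemma contDiff_pd {f : ℝ × ℝ × ℝ → ℝ} (hf : ContDiff ℝ (⊤ : ℕ∞) f) (v : ℝ × ℝ × ℝ) :
    ContDiff ℝ (⊤ : ℕ∞) (pd v f) :=
  (hf.fderiv_right (by simp)).clm_apply contDiff_const

lemma pd_add' {f g : ℝ × ℝ × ℝ → ℝ} {p v : ℝ × ℝ × ℝ}
    (hf : DifferentiableAt ℝ f p) (hg : DifferentiableAt ℝ g p) :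
    pd v (fun q => f q + g q) p = pd v f p + pd v g p := by
  simp [pd, fderiv_fun_add hf hg]

lemma pd_sub' {f g : ℝ × ℝ × ℝ → ℝ} {p v : ℝ × ℝ × ℝ}
    (hf : DifferentiableAt ℝ f p) (hg : DifferentiableAt ℝ g p) :
    pd v (fun q => f q - g q) p = pd v f p - pd v g p := by
  simp [pd, fderiv_fun_sub hf hg]

lemma pd_mul' {f g : ℝ × ℝ × ℝ → ℝ} {p v : ℝ × ℝ × ℝ}
    (hf : DifferentiableAt ℝ f p) (hg : DifferentiableAt ℝ g p) :
    pd v (fun q => f q * g q) p = pd v f p * g p + f p * pd v g p := by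
  simp [pd, fderiv_fun_mul hf hg]; ring

lemma pd_const_mul' {f : ℝ × ℝ × ℝ → ℝ} {p v : ℝ × ℝ × ℝ} (c : ℝ)
    (hf : DifferentiableAt ℝ f p) :
    pd v (fun q => c * f q) p = c * pd v f p := by
  simp [pd, fderiv_const_mul hf c]

lemma pd_const' {p v : ℝ × ℝ × ℝ} (c : ℝ) : pd v (fun _ => c) p = 0 := by
  simp [pd]

lemma pd_comm {f : ℝ × ℝ × ℝ → ℝ} (hf : ContDiff ℝ (⊤ : ℕ∞) f) (v w : ℝ × ℝ × ℝ) :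
    pd w (pd v f) = pd v (pd w f) := by
  funext p
  have hdf : ∀ q, HasFDerivAt f (fderiv ℝ f q) q := fun q =>
    ((hf.differentiable (by simp)) q).hasFDerivAt
  have hd1 : Differentiable ℝ (fderiv ℝ f) := (hf.fderiv_right (m := (⊤ : ℕ∞)) (by simp)).differentiable (by simp)
  have hd2 : HasFDerivAt (fderiv ℝ f) (fderiv ℝ (fderiv ℝ f) p) p := (hd1 p).hasFDerivAt
  have key : ∀ w u : ℝ × ℝ × ℝ, pd w (pd u f) p = fderiv ℝ (fderiv ℝ f) p w u := by
    intro w u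
    have h1 := hd2.clm_apply (hasFDerivAt_const u p)
    simp only [ContinuousLinearMap.comp_zero, zero_add] at h1
    have h2 : pd u f = fun q => fderiv ℝ f q u := rfl
    rw [pd, h2, h1.fderiv]
    simp
  rw [key w v, key v w]
  exact (second_derivative_symmetric hdf hd2 v w).symm

lemma p3x_eq {f : ℝ → ℝ → ℝ → ℝ} (hf : ContDiff ℝ (⊤ : ℕ∞) (uc f)) (x y t : ℝ) :
    p3x f x y t = pd (1, 0, 0) (uc f) (x, y, t) := by
  have hline : HasDerivAt (fun x' : ℝ => ((x', y, t) : ℝ × ℝ × ℝ)) ((1, 0, 0) : ℝ × ℝ × ℝ) x :=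
    HasDerivAt.prodMk (hasDerivAt_id x) (hasDerivAt_const x (y, t))
  have hg := ((hf.differentiable (by simp)) (x, y, t)).hasFDerivAt
  exact (hg.comp_hasDerivAt x hline).deriv

lemma p3y_eq {f : ℝ → ℝ → ℝ → ℝ} (hf : ContDiff ℝ (⊤ : ℕ∞) (uc f)) (x y t : ℝ) :
    p3y f x y t = pd (0, 1, 0) (uc f) (x, y, t) := by
  have hline : HasDerivAt (fun y' : ℝ => ((x, y', t) : ℝ × ℝ × ℝ)) ((0, 1, 0) : ℝ × ℝ × ℝ) y :=
    HasDerivAt.prodMk (hasDerivAt_const y x) (HasDerivAt.prodMk (hasDerivAt_id y) (hasDerivAt_const y t))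
  have hg := ((hf.differentiable (by simp)) (x, y, t)).hasFDerivAt
  exact (hg.comp_hasDerivAt y hline).deriv

lemma p3t_eq {f : ℝ → ℝ → ℝ → ℝ} (hf : ContDiff ℝ (⊤ : ℕ∞) (uc f)) (x y t : ℝ) :
    p3t f x y t = pd (0, 0, 1) (uc f) (x, y, t) := by
  have hline : HasDerivAt (fun t' : ℝ => ((x, y, t') : ℝ × ℝ × ℝ)) ((0, 0, 1) : ℝ × ℝ × ℝ) t :=
    HasDerivAt.prodMk (hasDerivAt_const t x) (HasDerivAt.prodMk (hasDerivAt_const t y) (hasDerivAt_id t))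
  have hg := ((hf.differentiable (by simp)) (x, y, t)).hasFDerivAt
  exact (hg.comp_hasDerivAt t hline).deriv

lemma uc_p3x {f : ℝ → ℝ → ℝ → ℝ} (hf : ContDiff ℝ (⊤ : ℕ∞) (uc f)) :
    uc (p3x f) = pd (1, 0, 0) (uc f) := funext fun p => p3x_eq hf p.1 p.2.1 p.2.2

lemma uc_p3y {f : ℝ → ℝ → ℝ → ℝ} (hf : ContDiff ℝ (⊤ : ℕ∞) (uc f)) :
    uc (p3y f) = pd (0, 1, 0) (uc f) := funext fun p => p3y_eq hf p.1 p.2.1 p.2.2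

/-- For smooth solutions of the 2+1 dimensional first-order bi-scale perturbation
of the KdV equation, the density `η₀η₁` satisfies a local conservation law
`∂_t(η₀η₁) = ∂_x F + ∂_y G` with explicit differential-polynomial fluxes `F`, `G`. -/
theorem coupled_kdv_2plus1_conservation (η₀ η₁ : ℝ → ℝ → ℝ → ℝ)
    (h₀ : ContDiff ℝ (⊤ : ℕ∞) (fun p : ℝ × ℝ × ℝ => η₀ p.1 p.2.1 p.2.2))
    (h₁ : ContDiff ℝ (⊤ : ℕ∞) (fun p : ℝ × ℝ × ℝ => η₁ p.1 p.2.1 p.2.2))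
    (heq₀ : ∀ x y t : ℝ,
      p3t η₀ x y t = p3x (p3x (p3x η₀)) x y t + 6 * η₀ x y t * p3x η₀ x y t)
    (heq₁ : ∀ x y t : ℝ,
      p3t η₁ x y t
        = p3x (p3x (p3x η₁)) x y t + 3 * p3y (p3x (p3x η₀)) x y t
          + 6 * p3x (fun x y t => η₀ x y t * η₁ x y t) x y t
          + 6 * η₀ x y t * p3y η₀ x y t) :
    ∃ F G : ℝ → ℝ → ℝ → ℝ,
      (F = fun x y t =>
          p3x (p3x η₀) x y t * η₁ x y t + η₀ x y t * p3x (p3x η₁) x y t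
            - p3x η₀ x y t * p3x η₁ x y t + 6 * (η₀ x y t) ^ 2 * η₁ x y t
            + 3 * η₀ x y t * p3y (p3x η₀) x y t
            - 3 / 2 * p3y (fun x y t => p3x η₀ x y t * η₀ x y t) x y t)
      ∧ (G = fun x y t =>
          2 * (η₀ x y t) ^ 3 + 3 * η₀ x y t * p3x (p3x η₀) x y t
            - 3 / 2 * (p3x η₀ x y t) ^ 2
            + 3 / 2 * p3x (fun x y t => η₀ x y t * p3x η₀ x y t) x y t
            - 3 * η₀ x y t * p3x (p3x η₀) x y t)
      ∧ ∀ x y t : ℝ,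
          p3t (fun x y t => η₀ x y t * η₁ x y t) x y t = p3x F x y t + p3y G x y t := by
  have hA : ContDiff ℝ (⊤ : ℕ∞) (uc η₀) := h₀
  have hB : ContDiff ℝ (⊤ : ℕ∞) (uc η₁) := h₁
  have hA1 : ContDiff ℝ (⊤ : ℕ∞) (pd (1,0,0) (uc η₀)) := contDiff_pd hA _
  have hA2 : ContDiff ℝ (⊤ : ℕ∞) (pd (0,1,0) (uc η₀)) := contDiff_pd hA _
  have hA11 : ContDiff ℝ (⊤ : ℕ∞) (pd (1,0,0) (pd (1,0,0) (uc η₀))) := contDiff_pd hA1 _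
  have hA12 : ContDiff ℝ (⊤ : ℕ∞) (pd (0,1,0) (pd (1,0,0) (uc η₀))) := contDiff_pd hA1 _
  have hB1 : ContDiff ℝ (⊤ : ℕ∞) (pd (1,0,0) (uc η₁)) := contDiff_pd hB _
  have hB11 : ContDiff ℝ (⊤ : ℕ∞) (pd (1,0,0) (pd (1,0,0) (uc η₁))) := contDiff_pd hB1 _
  have dA : Differentiable ℝ (uc η₀) := hA.differentiable (by simp)
  have dB : Differentiable ℝ (uc η₁) := hB.differentiable (by simp)
  have dA1 : Differentiable ℝ (pd (1,0,0) (uc η₀)) := hA1.differentiable (by simp)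
  have dA2 : Differentiable ℝ (pd (0,1,0) (uc η₀)) := hA2.differentiable (by simp)
  have dA11 : Differentiable ℝ (pd (1,0,0) (pd (1,0,0) (uc η₀))) := hA11.differentiable (by simp)
  have dA12 : Differentiable ℝ (pd (0,1,0) (pd (1,0,0) (uc η₀))) := hA12.differentiable (by simp)
  have dB1 : Differentiable ℝ (pd (1,0,0) (uc η₁)) := hB1.differentiable (by simp)
  have dB11 : Differentiable ℝ (pd (1,0,0) (pd (1,0,0) (uc η₁))) := hB11.differentiable (by simp)
  -- uncurried versions of the iterated partial derivatives
  have hux0 : uc (p3x η₀) = pd (1,0,0) (uc η₀) := uc_p3x hA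
  have hux1 : uc (p3x η₁) = pd (1,0,0) (uc η₁) := uc_p3x hB
  have hsx0 : ContDiff ℝ (⊤ : ℕ∞) (uc (p3x η₀)) := by rw [hux0]; exact hA1
  have hsx1 : ContDiff ℝ (⊤ : ℕ∞) (uc (p3x η₁)) := by rw [hux1]; exact hB1
  have hux00 : uc (p3x (p3x η₀)) = pd (1,0,0) (pd (1,0,0) (uc η₀)) := by
    rw [uc_p3x hsx0, hux0]
  have hux11 : uc (p3x (p3x η₁)) = pd (1,0,0) (pd (1,0,0) (uc η₁)) := by
    rw [uc_p3x hsx1, hux1]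
  have hsx00 : ContDiff ℝ (⊤ : ℕ∞) (uc (p3x (p3x η₀))) := by rw [hux00]; exact hA11
  have hsx11 : ContDiff ℝ (⊤ : ℕ∞) (uc (p3x (p3x η₁))) := by rw [hux11]; exact hB11
  -- pointwise translation lemmas
  have hx0 : ∀ x y t : ℝ, p3x η₀ x y t = pd (1,0,0) (uc η₀) (x,y,t) := p3x_eq hA
  have hx1 : ∀ x y t : ℝ, p3x η₁ x y t = pd (1,0,0) (uc η₁) (x,y,t) := p3x_eq hB
  have hy0 : ∀ x y t : ℝ, p3y η₀ x y t = pd (0,1,0) (uc η₀) (x,y,t) := p3y_eq hA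
  have hx00 : ∀ x y t : ℝ, p3x (p3x η₀) x y t = pd (1,0,0) (pd (1,0,0) (uc η₀)) (x,y,t) := by
    intro x y t; rw [p3x_eq hsx0, hux0]
  have hx11 : ∀ x y t : ℝ, p3x (p3x η₁) x y t = pd (1,0,0) (pd (1,0,0) (uc η₁)) (x,y,t) := by
    intro x y t; rw [p3x_eq hsx1, hux1]
  have hx000 : ∀ x y t : ℝ,
      p3x (p3x (p3x η₀)) x y t = pd (1,0,0) (pd (1,0,0) (pd (1,0,0) (uc η₀))) (x,y,t) := by
    intro x y t; rw [p3x_eq hsx00, hux00]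
  have hx111 : ∀ x y t : ℝ,
      p3x (p3x (p3x η₁)) x y t = pd (1,0,0) (pd (1,0,0) (pd (1,0,0) (uc η₁))) (x,y,t) := by
    intro x y t; rw [p3x_eq hsx11, hux11]
  have hyx0 : ∀ x y t : ℝ,
      p3y (p3x η₀) x y t = pd (0,1,0) (pd (1,0,0) (uc η₀)) (x,y,t) := by
    intro x y t; rw [p3y_eq hsx0, hux0]
  have hyx00 : ∀ x y t : ℝ,
      p3y (p3x (p3x η₀)) x y t = pd (0,1,0) (pd (1,0,0) (pd (1,0,0) (uc η₀))) (x,y,t) := by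
    intro x y t; rw [p3y_eq hsx00, hux00]
  -- the product η₀ η₁
  have hP : uc (fun x y t => η₀ x y t * η₁ x y t) = fun q => uc η₀ q * uc η₁ q := rfl
  have hsP : ContDiff ℝ (⊤ : ℕ∞) (uc (fun x y t => η₀ x y t * η₁ x y t)) := hA.mul hB
  have hxP : ∀ x y t : ℝ, p3x (fun x y t => η₀ x y t * η₁ x y t) x y t
      = pd (1,0,0) (uc η₀) (x,y,t) * uc η₁ (x,y,t)
        + uc η₀ (x,y,t) * pd (1,0,0) (uc η₁) (x,y,t) := by
    intro x y t
    rw [p3x_eq hsP, hP, pd_mul' (dA (x,y,t)) (dB (x,y,t))]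
  -- the product (η₀)_x · η₀ appearing in F
  have hucQ : uc (fun x y t => p3x η₀ x y t * η₀ x y t)
      = fun q => pd (1,0,0) (uc η₀) q * uc η₀ q := by
    rw [show uc (fun x y t => p3x η₀ x y t * η₀ x y t)
        = fun q => uc (p3x η₀) q * uc η₀ q from rfl, hux0]
  have hsQ : ContDiff ℝ (⊤ : ℕ∞) (uc (fun x y t => p3x η₀ x y t * η₀ x y t)) := by
    rw [hucQ]; exact hA1.mul hA
  have hyQ : ∀ x y t : ℝ, p3y (fun x y t => p3x η₀ x y t * η₀ x y t) x y t
      = pd (0,1,0) (pd (1,0,0) (uc η₀)) (x,y,t) * uc η₀ (x,y,t)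
        + pd (1,0,0) (uc η₀) (x,y,t) * pd (0,1,0) (uc η₀) (x,y,t) := by
    intro x y t
    rw [p3y_eq hsQ, hucQ, pd_mul' (dA1 (x,y,t)) (dA (x,y,t))]
  -- the product η₀ · (η₀)_x appearing in G
  have hucR : uc (fun x y t => η₀ x y t * p3x η₀ x y t)
      = fun q => uc η₀ q * pd (1,0,0) (uc η₀) q := by
    rw [show uc (fun x y t => η₀ x y t * p3x η₀ x y t)
        = fun q => uc η₀ q * uc (p3x η₀) q from rfl, hux0]
  have hsR : ContDiff ℝ (⊤ : ℕ∞) (uc (fun x y t => η₀ x y t * p3x η₀ x y t)) := by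
    rw [hucR]; exact hA.mul hA1
  have hxR : ∀ x y t : ℝ, p3x (fun x y t => η₀ x y t * p3x η₀ x y t) x y t
      = pd (1,0,0) (uc η₀) (x,y,t) * pd (1,0,0) (uc η₀) (x,y,t)
        + uc η₀ (x,y,t) * pd (1,0,0) (pd (1,0,0) (uc η₀)) (x,y,t) := by
    intro x y t
    rw [p3x_eq hsR, hucR, pd_mul' (dA (x,y,t)) (dA1 (x,y,t))]
  -- translated evolution equations
  have HA3 : ∀ x y t : ℝ, pd (0,0,1) (uc η₀) (x,y,t)
      = pd (1,0,0) (pd (1,0,0) (pd (1,0,0) (uc η₀))) (x,y,t)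
        + 6 * uc η₀ (x,y,t) * pd (1,0,0) (uc η₀) (x,y,t) := by
    intro x y t
    have h := heq₀ x y t
    rw [p3t_eq hA, hx000, hx0] at h
    exact h
  have HB3 : ∀ x y t : ℝ, pd (0,0,1) (uc η₁) (x,y,t)
      = pd (1,0,0) (pd (1,0,0) (pd (1,0,0) (uc η₁))) (x,y,t)
        + 3 * pd (0,1,0) (pd (1,0,0) (pd (1,0,0) (uc η₀))) (x,y,t)
        + 6 * (pd (1,0,0) (uc η₀) (x,y,t) * uc η₁ (x,y,t)
            + uc η₀ (x,y,t) * pd (1,0,0) (uc η₁) (x,y,t))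
        + 6 * uc η₀ (x,y,t) * pd (0,1,0) (uc η₀) (x,y,t) := by
    intro x y t
    have h := heq₁ x y t
    rw [p3t_eq hB, hx111, hyx00, hxP, hy0] at h
    exact h
  -- uncurried versions of the fluxes
  have hucF : uc (fun x y t =>
      p3x (p3x η₀) x y t * η₁ x y t + η₀ x y t * p3x (p3x η₁) x y t
        - p3x η₀ x y t * p3x η₁ x y t + 6 * (η₀ x y t) ^ 2 * η₁ x y t
        + 3 * η₀ x y t * p3y (p3x η₀) x y t
        - 3 / 2 * p3y (fun x y t => p3x η₀ x y t * η₀ x y t) x y t)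
      = fun q =>
        pd (1,0,0) (pd (1,0,0) (uc η₀)) q * uc η₁ q
          + uc η₀ q * pd (1,0,0) (pd (1,0,0) (uc η₁)) q
          - pd (1,0,0) (uc η₀) q * pd (1,0,0) (uc η₁) q
          + 6 * (uc η₀ q * uc η₀ q) * uc η₁ q
          + 3 * (uc η₀ q * pd (0,1,0) (pd (1,0,0) (uc η₀)) q)
          - 3 / 2 * (pd (0,1,0) (pd (1,0,0) (uc η₀)) q * uc η₀ q
              + pd (1,0,0) (uc η₀) q * pd (0,1,0) (uc η₀) q) := by
    funext q
    show p3x (p3x η₀) q.1 q.2.1 q.2.2 * η₁ q.1 q.2.1 q.2.2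
        + η₀ q.1 q.2.1 q.2.2 * p3x (p3x η₁) q.1 q.2.1 q.2.2
        - p3x η₀ q.1 q.2.1 q.2.2 * p3x η₁ q.1 q.2.1 q.2.2
        + 6 * (η₀ q.1 q.2.1 q.2.2) ^ 2 * η₁ q.1 q.2.1 q.2.2
        + 3 * η₀ q.1 q.2.1 q.2.2 * p3y (p3x η₀) q.1 q.2.1 q.2.2
        - 3 / 2 * p3y (fun x y t => p3x η₀ x y t * η₀ x y t) q.1 q.2.1 q.2.2 = _
    rw [hx00, hx11, hx0, hx1, hyx0, hyQ,
      show ((q.1, q.2.1, q.2.2) : ℝ × ℝ × ℝ) = q from rfl]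
    show _ = pd (1,0,0) (pd (1,0,0) (uc η₀)) q * uc η₁ q
      + uc η₀ q * pd (1,0,0) (pd (1,0,0) (uc η₁)) q
      - pd (1,0,0) (uc η₀) q * pd (1,0,0) (uc η₁) q
      + 6 * (uc η₀ q * uc η₀ q) * uc η₁ q
      + 3 * (uc η₀ q * pd (0,1,0) (pd (1,0,0) (uc η₀)) q)
      - 3 / 2 * (pd (0,1,0) (pd (1,0,0) (uc η₀)) q * uc η₀ q
          + pd (1,0,0) (uc η₀) q * pd (0,1,0) (uc η₀) q)
    have e0 : η₀ q.1 q.2.1 q.2.2 = uc η₀ q := rfl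
    have e1 : η₁ q.1 q.2.1 q.2.2 = uc η₁ q := rfl
    rw [e0, e1]
    ring
  have hucG : uc (fun x y t =>
      2 * (η₀ x y t) ^ 3 + 3 * η₀ x y t * p3x (p3x η₀) x y t
        - 3 / 2 * (p3x η₀ x y t) ^ 2
        + 3 / 2 * p3x (fun x y t => η₀ x y t * p3x η₀ x y t) x y t
        - 3 * η₀ x y t * p3x (p3x η₀) x y t)
      = fun q =>
        2 * (uc η₀ q * (uc η₀ q * uc η₀ q))
          + 3 * (uc η₀ q * pd (1,0,0) (pd (1,0,0) (uc η₀)) q)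
          - 3 / 2 * (pd (1,0,0) (uc η₀) q * pd (1,0,0) (uc η₀) q)
          + 3 / 2 * (pd (1,0,0) (uc η₀) q * pd (1,0,0) (uc η₀) q
              + uc η₀ q * pd (1,0,0) (pd (1,0,0) (uc η₀)) q)
          - 3 * (uc η₀ q * pd (1,0,0) (pd (1,0,0) (uc η₀)) q) := by
    funext q
    show 2 * (η₀ q.1 q.2.1 q.2.2) ^ 3
        + 3 * η₀ q.1 q.2.1 q.2.2 * p3x (p3x η₀) q.1 q.2.1 q.2.2
        - 3 / 2 * (p3x η₀ q.1 q.2.1 q.2.2) ^ 2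
        + 3 / 2 * p3x (fun x y t => η₀ x y t * p3x η₀ x y t) q.1 q.2.1 q.2.2
        - 3 * η₀ q.1 q.2.1 q.2.2 * p3x (p3x η₀) q.1 q.2.1 q.2.2 = _
    rw [hx00, hx0, hxR, show ((q.1, q.2.1, q.2.2) : ℝ × ℝ × ℝ) = q from rfl]
    show _ = 2 * (uc η₀ q * (uc η₀ q * uc η₀ q))
      + 3 * (uc η₀ q * pd (1,0,0) (pd (1,0,0) (uc η₀)) q)
      - 3 / 2 * (pd (1,0,0) (uc η₀) q * pd (1,0,0) (uc η₀) q)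
      + 3 / 2 * (pd (1,0,0) (uc η₀) q * pd (1,0,0) (uc η₀) q
          + uc η₀ q * pd (1,0,0) (pd (1,0,0) (uc η₀)) q)
      - 3 * (uc η₀ q * pd (1,0,0) (pd (1,0,0) (uc η₀)) q)
    have e0 : η₀ q.1 q.2.1 q.2.2 = uc η₀ q := rfl
    rw [e0]
    ring
  have hsF : ContDiff ℝ (⊤ : ℕ∞) (uc (fun x y t =>
      p3x (p3x η₀) x y t * η₁ x y t + η₀ x y t * p3x (p3x η₁) x y t
        - p3x η₀ x y t * p3x η₁ x y t + 6 * (η₀ x y t) ^ 2 * η₁ x y t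
        + 3 * η₀ x y t * p3y (p3x η₀) x y t
        - 3 / 2 * p3y (fun x y t => p3x η₀ x y t * η₀ x y t) x y t)) := by
    rw [hucF]; fun_prop
  have hsG : ContDiff ℝ (⊤ : ℕ∞) (uc (fun x y t =>
      2 * (η₀ x y t) ^ 3 + 3 * η₀ x y t * p3x (p3x η₀) x y t
        - 3 / 2 * (p3x η₀ x y t) ^ 2
        + 3 / 2 * p3x (fun x y t => η₀ x y t * p3x η₀ x y t) x y t
        - 3 * η₀ x y t * p3x (p3x η₀) x y t)) := by
    rw [hucG]; fun_prop
  refine ⟨_, _, rfl, rfl, ?_⟩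
  intro x y t
  rw [p3t_eq hsP, hP, p3x_eq hsF, hucF, p3y_eq hsG, hucG]
  simp (disch := fun_prop) only [pd_add', pd_sub', pd_mul', pd_const_mul', pd_const']
  rw [pd_comm hA1 (0,1,0) (1,0,0), pd_comm hA (0,1,0) (1,0,0), HA3, HB3]
  ring

end
end

section
/- Let η₀, η₁, η₂ : ℝ² → ℝ be smooth functions satisfying the second-order standard perturbation KdV system η₀_t = η₀_{xxx} + 6η₀η₀_x, η₁_t = η₁_{xxx} + 6(η₀η₁)_x, η₂_t = η₂_{xxx} + 6η₁η₁_x + 6(η₀η₂)_x. Then the density H = η₀η₂ + ½η₁² satisfies a local conservation law: with flux F = η₀_{xx}η₂ + η₀η₂_{xx} + η₁η₁_{xx} − η₀_xη₂_x − ½η₁_x² + 6η₀²η₂ + 6η₀η₁², the identity ∂_t(η₀η₂ + ½η₁²) = ∂_x F holds pointwise. -/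
noncomputable section

def pdx (f : ℝ → ℝ → ℝ) : ℝ → ℝ → ℝ := fun x t => deriv (fun x' => f x' t) x
def pdt (f : ℝ → ℝ → ℝ) : ℝ → ℝ → ℝ := fun x t => deriv (fun t' => f x t') t

open Function

lemma hasDerivAt_sectx {f : ℝ → ℝ → ℝ} (hf : ContDiff ℝ (⊤ : ℕ∞) (uncurry f)) (x t : ℝ) :
    HasDerivAt (fun x' => f x' t) (pdx f x t) x := by
  have h : DifferentiableAt ℝ (fun x' => f x' t) x := by
    have : (fun x' => f x' t) = (uncurry f) ∘ (fun x' => (x', t)) := rfl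
    rw [this]
    exact (hf.differentiable (by simp) (x, t)).comp x
      (differentiableAt_id.prodMk (differentiableAt_const t))
  exact h.hasDerivAt

lemma hasDerivAt_sectt {f : ℝ → ℝ → ℝ} (hf : ContDiff ℝ (⊤ : ℕ∞) (uncurry f)) (x t : ℝ) :
    HasDerivAt (fun t' => f x t') (pdt f x t) t := by
  have h : DifferentiableAt ℝ (fun t' => f x t') t := by
    have : (fun t' => f x t') = (uncurry f) ∘ (fun t' => (x, t')) := rfl
    rw [this]
    exact (hf.differentiable (by simp) (x, t)).comp t
      ((differentiableAt_const x).prodMk differentiableAt_id)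
  exact h.hasDerivAt

lemma contDiff_pdx {f : ℝ → ℝ → ℝ} (hf : ContDiff ℝ (⊤ : ℕ∞) (uncurry f)) :
    ContDiff ℝ (⊤ : ℕ∞) (uncurry (pdx f)) := by
  have key : uncurry (pdx f) = fun p : ℝ × ℝ => fderiv ℝ (uncurry f) p (1, 0) := by
    ext ⟨x, t⟩
    have h1 : HasFDerivAt (fun x' : ℝ => (x', t))
        ((ContinuousLinearMap.id ℝ ℝ).prod 0) x :=
      (hasFDerivAt_id x).prodMk (hasFDerivAt_const t x)
    have h2 : HasFDerivAt (uncurry f) (fderiv ℝ (uncurry f) (x, t)) (x, t) :=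
      (hf.differentiable (by simp) (x, t)).hasFDerivAt
    have h3 : HasDerivAt (fun x' => f x' t)
        (((fderiv ℝ (uncurry f) (x, t)).comp ((ContinuousLinearMap.id ℝ ℝ).prod 0)) 1) x :=
      by have := (h2.comp x h1).hasDerivAt; exact this
    have h4 := h3.deriv
    simpa [uncurry, pdx] using h4
  rw [key]
  exact (hf.fderiv_right (by simp)).clm_apply contDiff_const

/-- For smooth solutions of the second-order standard perturbation KdV system,
the density `η₀η₂ + ½η₁²` satisfies the local conservation law
`∂_t(η₀η₂ + ½η₁²) = ∂_x F` with the explicit flux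
`F = η₀_{xx}η₂ + η₀η₂_{xx} + η₁η₁_{xx} − η₀_xη₂_x − ½η₁_x² + 6η₀²η₂ + 6η₀η₁²`. -/
theorem second_order_perturbation_conservation (η₀ η₁ η₂ : ℝ → ℝ → ℝ)
    (h₀ : ContDiff ℝ (⊤ : ℕ∞) (Function.uncurry η₀))
    (h₁ : ContDiff ℝ (⊤ : ℕ∞) (Function.uncurry η₁))
    (h₂ : ContDiff ℝ (⊤ : ℕ∞) (Function.uncurry η₂))
    (heq₀ : ∀ x t : ℝ, pdt η₀ x t = pdx (pdx (pdx η₀)) x t + 6 * η₀ x t * pdx η₀ x t)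
    (heq₁ : ∀ x t : ℝ, pdt η₁ x t
        = pdx (pdx (pdx η₁)) x t + 6 * pdx (fun x t => η₀ x t * η₁ x t) x t)
    (heq₂ : ∀ x t : ℝ, pdt η₂ x t
        = pdx (pdx (pdx η₂)) x t + 6 * η₁ x t * pdx η₁ x t
          + 6 * pdx (fun x t => η₀ x t * η₂ x t) x t) :
    ∀ x t : ℝ,
      pdt (fun x t => η₀ x t * η₂ x t + (η₁ x t) ^ 2 / 2) x t
        = pdx (fun x t =>
            pdx (pdx η₀) x t * η₂ x t + η₀ x t * pdx (pdx η₂) x t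
              + η₁ x t * pdx (pdx η₁) x t - pdx η₀ x t * pdx η₂ x t
              - (pdx η₁ x t) ^ 2 / 2 + 6 * (η₀ x t) ^ 2 * η₂ x t
              + 6 * η₀ x t * (η₁ x t) ^ 2) x t := by
  intro x t
  -- x-direction derivatives
  have d0 := hasDerivAt_sectx h₀ x t
  have d1 := hasDerivAt_sectx h₁ x t
  have d2 := hasDerivAt_sectx h₂ x t
  have d0' := hasDerivAt_sectx (contDiff_pdx h₀) x t
  have d1' := hasDerivAt_sectx (contDiff_pdx h₁) x t
  have d2' := hasDerivAt_sectx (contDiff_pdx h₂) x t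
  have d0'' := hasDerivAt_sectx (contDiff_pdx (contDiff_pdx h₀)) x t
  have d1'' := hasDerivAt_sectx (contDiff_pdx (contDiff_pdx h₁)) x t
  have d2'' := hasDerivAt_sectx (contDiff_pdx (contDiff_pdx h₂)) x t
  -- t-direction derivatives
  have e0 := hasDerivAt_sectt h₀ x t
  have e1 := hasDerivAt_sectt h₁ x t
  have e2 := hasDerivAt_sectt h₂ x t
  have hL : pdt (fun x t => η₀ x t * η₂ x t + (η₁ x t) ^ 2 / 2) x t
      = pdt η₀ x t * η₂ x t + η₀ x t * pdt η₂ x t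
        + (↑(2:ℕ) * η₁ x t ^ (2 - 1) * pdt η₁ x t) / 2 :=
    ((e0.mul e2).add ((e1.pow 2).div_const 2)).deriv
  have hR : pdx (fun x t =>
        pdx (pdx η₀) x t * η₂ x t + η₀ x t * pdx (pdx η₂) x t
          + η₁ x t * pdx (pdx η₁) x t - pdx η₀ x t * pdx η₂ x t
          - (pdx η₁ x t) ^ 2 / 2 + 6 * (η₀ x t) ^ 2 * η₂ x t
          + 6 * η₀ x t * (η₁ x t) ^ 2) x t
      = (pdx (pdx (pdx η₀)) x t * η₂ x t + pdx (pdx η₀) x t * pdx η₂ x t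
          + (pdx η₀ x t * pdx (pdx η₂) x t + η₀ x t * pdx (pdx (pdx η₂)) x t)
          + (pdx η₁ x t * pdx (pdx η₁) x t + η₁ x t * pdx (pdx (pdx η₁)) x t)
          - (pdx (pdx η₀) x t * pdx η₂ x t + pdx η₀ x t * pdx (pdx η₂) x t)
          - (↑(2:ℕ) * pdx η₁ x t ^ (2 - 1) * pdx (pdx η₁) x t) / 2
          + ((6 * (↑(2:ℕ) * η₀ x t ^ (2 - 1) * pdx η₀ x t)) * η₂ x t
              + 6 * (η₀ x t) ^ 2 * pdx η₂ x t)
          + ((6 * pdx η₀ x t) * (η₁ x t) ^ 2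
              + (6 * η₀ x t) * (↑(2:ℕ) * η₁ x t ^ (2 - 1) * pdx η₁ x t))) :=
    (((((((d0''.mul d2).add (d0.mul d2'')).add (d1.mul d1'')).sub (d0'.mul d2')).sub
        ((d1'.pow 2).div_const 2)).add (((d0.pow 2).const_mul 6).mul d2)).add
        ((d0.const_mul 6).mul (d1.pow 2))).deriv
  have p01 : pdx (fun x t => η₀ x t * η₁ x t) x t
      = pdx η₀ x t * η₁ x t + η₀ x t * pdx η₁ x t := (d0.mul d1).deriv
  have p02 : pdx (fun x t => η₀ x t * η₂ x t) x t
      = pdx η₀ x t * η₂ x t + η₀ x t * pdx η₂ x t := (d0.mul d2).deriv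
  rw [hL, hR, heq₀ x t, heq₁ x t, heq₂ x t, p01, p02]
  push_cast
  ring

end
end
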